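/- If p : E → B is an arc-hedgehog covering, E is a Peano space, and B has a countable neighborhood basis at b₀, then the fiber p⁻¹(b₀) is a Baire space. -/

import Mathlib

open unitInterval Topology

set_option linter.unnecessarySimpa false

universe u v w

/-- `p : E → B` is an arc-covering: unique lifting of paths given the initial point. -/
def IsArcCovering {E : Type*} {B : Type*} [TopologicalSpace E] [TopologicalSpace B]
    (p : C(E, B)) : Prop :=
  ∀ (e₀ : E) (f : C(I, B)), f 0 = p e₀ →
    ∃! g : C(I, E), p.comp g = f ∧ g 0 = e₀

/-- The relation identifying the wedge points of a wedge of copies of `(A, a₀)` indexed by `S`. -/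
def wedgeRel (S A : Type*) (a₀ : A) (x y : S × A) : Prop :=
  x = y ∨ (x.2 = a₀ ∧ y.2 = a₀)

/-- The wedge (one-point union) of copies of `(A, a₀)` indexed by `S`. -/
def Wedge (S A : Type*) (a₀ : A) : Type _ :=
  Quot (wedgeRel S A a₀)

/-- The topology of a directed wedge: a set is open iff its trace on each copy of `A`
is open, and if it contains the wedge point then it contains all copies of `A`
beyond some index. -/
instance Wedge.instTopologicalSpace (S A : Type*) (a₀ : A) [Preorder S]
    [IsDirected S (· ≤ ·)] [TopologicalSpace A] : TopologicalSpace (Wedge S A a₀) where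
  IsOpen U := (∀ s : S, IsOpen {a : A | Quot.mk (wedgeRel S A a₀) (s, a) ∈ U}) ∧
    ((∃ s : S, Quot.mk (wedgeRel S A a₀) (s, a₀) ∈ U) →
      ∃ t : S, ∀ s : S, t < s → ∀ a : A, Quot.mk (wedgeRel S A a₀) (s, a) ∈ U)
  isOpen_univ := by
    refine ⟨fun s => ?_, fun h => ?_⟩
    · show IsOpen (Set.univ : Set A)
      exact isOpen_univ
    · obtain ⟨s, -⟩ := h
      exact ⟨s, fun _ _ _ => trivial⟩
  isOpen_inter := by
    rintro U V ⟨hU1, hU2⟩ ⟨hV1, hV2⟩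
    refine ⟨fun s => (hU1 s).inter (hV1 s), fun h => ?_⟩
    obtain ⟨tU, htU⟩ := hU2 ⟨h.choose, h.choose_spec.1⟩
    obtain ⟨tV, htV⟩ := hV2 ⟨h.choose, h.choose_spec.2⟩
    obtain ⟨t, ht1, ht2⟩ := directed_of (· ≤ ·) tU tV
    exact ⟨t, fun s hs a => ⟨htU s (lt_of_le_of_lt ht1 hs) a, htV s (lt_of_le_of_lt ht2 hs) a⟩⟩
  isOpen_sUnion := by
    intro C hC
    constructor
    · intro s
      have : {a : A | Quot.mk (wedgeRel S A a₀) (s, a) ∈ ⋃₀ C} =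
          ⋃ U ∈ C, {a : A | Quot.mk (wedgeRel S A a₀) (s, a) ∈ U} := by
        ext a
        simp only [Set.mem_setOf_eq, Set.mem_sUnion, Set.mem_iUnion, exists_prop]
        exact Iff.rfl
      rw [this]
      exact isOpen_biUnion fun U hU => (hC U hU).1 s
    · rintro ⟨s, hs⟩
      obtain ⟨U, hUC, hsU⟩ := hs
      obtain ⟨t, ht⟩ := (hC U hUC).2 ⟨s, hsU⟩
      exact ⟨t, fun s' hs' a => ⟨U, hUC, ht s' hs' a⟩⟩

/-- An arc-hedgehog over a directed set `S`: the directed wedge of copies of `([0,1], 0)`. -/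
def ArcHedgehog (S : Type*) : Type _ := Wedge S I 0

instance (S : Type*) [Preorder S] [IsDirected S (· ≤ ·)] : TopologicalSpace (ArcHedgehog S) :=
  Wedge.instTopologicalSpace S I 0

/-- `p` is an arc-hedgehog covering: maps from arc-hedgehogs lift uniquely. -/
def IsArcHedgehogCovering {E : Type*} {B : Type*} [TopologicalSpace E] [TopologicalSpace B]
    (p : C(E, B)) : Prop :=
  ∀ (S : Type u) [Preorder S] [IsDirected S (· ≤ ·)],
    ∀ (e₀ : E) (f : C(ArcHedgehog S, B)) (z₀ : ArcHedgehog S), f z₀ = p e₀ →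
      ∃! g : C(ArcHedgehog S, E), p.comp g = f ∧ g z₀ = e₀

/-- The closed unit `2`-disk. -/
noncomputable def Disk : Type := Metric.closedBall (0 : EuclideanSpace ℝ (Fin 2)) 1

noncomputable instance : TopologicalSpace Disk := by unfold Disk; infer_instance

/-- The center of the disk. -/
noncomputable def Disk.center : Disk := ⟨0, by simp⟩

/-- A disk-hedgehog over a directed set `S`: the directed wedge of copies of the pointed disk. -/
def DiskHedgehog (S : Type*) : Type _ := Wedge S Disk Disk.center

noncomputable instance (S : Type*) [Preorder S] [IsDirected S (· ≤ ·)] : TopologicalSpace (DiskHedgehog S) :=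
  Wedge.instTopologicalSpace S Disk Disk.center

/-- `p` is a disk-hedgehog covering: maps from disk-hedgehogs lift uniquely. -/
def IsDiskHedgehogCovering {E : Type*} {B : Type*} [TopologicalSpace E] [TopologicalSpace B]
    (p : C(E, B)) : Prop :=
  ∀ (S : Type u) [Preorder S] [IsDirected S (· ≤ ·)],
    ∀ (e₀ : E) (f : C(DiskHedgehog S, B)) (z₀ : DiskHedgehog S), f z₀ = p e₀ →
      ∃! g : C(DiskHedgehog S, E), p.comp g = f ∧ g z₀ = e₀

/-- `p` is a disk-covering: maps from the closed `2`-disk lift uniquely. -/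
def IsDiskCovering {E : Type*} {B : Type*} [TopologicalSpace E] [TopologicalSpace B]
    (p : C(E, B)) : Prop :=
  ∀ (e₀ : E) (f : C(Disk, B)) (d₀ : Disk), f d₀ = p e₀ →
    ∃! g : C(Disk, E), p.comp g = f ∧ g d₀ = e₀

/-- Path components of preimages of neighborhoods form a neighborhood basis of the
total space. -/
def HedgehogBasisCondition {E : Type*} {B : Type*} [TopologicalSpace E] [TopologicalSpace B]
    (p : C(E, B)) : Prop :=
  ∀ (e₀ : E) (U : Set E), IsOpen U → e₀ ∈ U →
    ∃ V ∈ 𝓝 (p e₀), {y : E | JoinedIn (p ⁻¹' V) e₀ y} ⊆ U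

/-- The monodromy relation on loops at `b₀`: two loops are identified iff any two of
their lifts starting at the same point end at the same point. -/
def MonodromyRel {E : Type*} {B : Type*} [TopologicalSpace E] [TopologicalSpace B]
    (p : C(E, B)) (b₀ : B) (α β : Path b₀ b₀) : Prop :=
  ∀ g h : C(I, E), (∀ t, p (g t) = α t) → (∀ t, p (h t) = β t) →
    g 0 = h 0 → g 1 = h 1

/-- `p` is regular: for each loop in `B`, all lifts are loops or all lifts are non-loops. -/
def IsRegularCovering {E : Type*} {B : Type*} [TopologicalSpace E] [TopologicalSpace B]
    (p : C(E, B)) : Prop :=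
  ∀ (b : B) (α : Path b b) (g h : C(I, E)),
    (∀ t, p (g t) = α t) → (∀ t, p (h t) = α t) → g 0 = g 1 → h 0 = h 1

/-!
Given dense open sets `D n` of the fiber `F = p⁻¹ {b₀}` and a nonempty open `U ⊆ F`, choose
points `y n ∈ F` and neighbourhoods `W n` of `b₀` shrinking along a countable basis such that
`y (n + 1)` is joined to `y n` inside `p⁻¹ (W n)`, every point of `F` joined to `y (n + 1)` inside
`p⁻¹ (W (n + 1))` lies in `D n`, and every point joined to `y 0` inside `p⁻¹ (W 0)` lies in `U`;
this uses that path components of preimages of neighbourhoods form a basis. The projections of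
the joining paths concatenate to a single path in `B` ending at `b₀`. Its lift from `y 0` passes
through every `y n`, so its endpoint lies in `F` and is joined to every `y n` inside `p⁻¹ (W n)`,
hence lies in `U ∩ ⋂ n, D n`.
-/

open Set Filter

namespace Path

-- `seqConcat` runs `γ n` along `seqConcatTime n`, the inverse of `t ↦ t / (1 - t)` on `[n, n + 1]`.
noncomputable def seqConcatTime (n : ℕ) : C(I, I) where
  toFun s := ⟨(n + s) / (n + s + 1), by have := s.2.1; positivity,
    div_le_one_of_le₀ (by linarith) (by have := s.2.1; positivity)⟩
  continuous_toFun := by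
    refine Continuous.subtype_mk (Continuous.div (by fun_prop) (by fun_prop) fun s => ?_) _
    have := s.2.1
    positivity

theorem coe_seqConcatTime (n : ℕ) (s : I) :
    (seqConcatTime n s : ℝ) = (n + s) / (n + s + 1) := rfl

theorem seqConcatTime_lt_one (n : ℕ) (s : I) : (seqConcatTime n s : ℝ) < 1 := by
  have := s.2.1
  rw [coe_seqConcatTime, div_lt_one (by positivity)]
  linarith

theorem seqConcatTime_div_one_sub (n : ℕ) (s : I) :
    (seqConcatTime n s : ℝ) / (1 - seqConcatTime n s) = n + s := by
  have := s.2.1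
  rw [coe_seqConcatTime]
  field_simp
  ring

theorem seqConcatTime_zero_zero : seqConcatTime 0 0 = 0 := by
  ext; simp [coe_seqConcatTime]

theorem seqConcatTime_one (n : ℕ) : seqConcatTime n 1 = seqConcatTime (n + 1) 0 := by
  ext; simp [coe_seqConcatTime]

theorem le_div_one_sub_of_seqConcatTime_le {n : ℕ} {t : I} (ht : seqConcatTime n 0 ≤ t)
    (ht1 : (t : ℝ) < 1) : (n : ℝ) ≤ t / (1 - t) := by
  have ht' : (n : ℝ) / (n + 1) ≤ t := by simpa [← Subtype.coe_le_coe, coe_seqConcatTime] using ht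
  rw [div_le_iff₀ (by positivity)] at ht'
  rw [le_div_iff₀ (by linarith)]
  linarith

variable {X : Type*} [TopologicalSpace X] {x : ℕ → X} (γ : ∀ n, Path (x n) (x (n + 1))) {b : X}

noncomputable def seqConcatReal (r : ℝ) : X :=
  (γ ⌊r⌋₊).extend (r - ⌊r⌋₊)

theorem seqConcatReal_mem {S : Set X} {n : ℕ} (hS : ∀ m ≥ n, ∀ t, γ m t ∈ S) {r : ℝ}
    (hr : n ≤ r) : seqConcatReal γ r ∈ S := by
  obtain ⟨t, ht⟩ : seqConcatReal γ r ∈ range (γ ⌊r⌋₊) := by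
    rw [← extend_range]; exact mem_range_self _
  exact ht ▸ hS _ (Nat.le_floor hr) t

theorem seqConcatReal_eqOn (n : ℕ) :
    EqOn (seqConcatReal γ) (fun r => (γ n).extend (r - n)) (Icc n (n + 1)) := by
  rintro r ⟨hnr, hrn⟩
  rcases hrn.lt_or_eq with hlt | rfl
  · rw [seqConcatReal, Nat.floor_eq_on_Ico n r ⟨hnr, hlt⟩]
  · have : ⌊(n : ℝ) + 1⌋₊ = n + 1 := mod_cast Nat.floor_natCast (n + 1)
    rw [seqConcatReal, this]
    simp

theorem continuousOn_seqConcatReal : ContinuousOn (seqConcatReal γ) (Ici 0) := by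
  have hfin : LocallyFinite fun n : ℕ => Icc (n : ℝ) (n + 1) := by
    have := (locallyFinite_Icc_of_tendsto (f := fun n : ℤ => (n : ℝ)) (g := fun n => (n : ℝ) + 1)
      tendsto_intCast_atTop_atTop (tendsto_atBot_add_const_right _ 1
        (tendsto_intCast_atBot_iff.2 tendsto_id))).comp_injective Nat.cast_injective
    simpa [Function.comp_def] using this
  refine (hfin.continuousOn_iUnion (fun n => isClosed_Icc) fun n => ?_).mono fun r hr => ?_
  · exact ((γ n).continuous_extend.comp_continuousOn (by fun_prop)).congr
      (seqConcatReal_eqOn γ n)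
  · exact mem_iUnion.2 ⟨⌊r⌋₊, Nat.floor_le hr, (Nat.lt_floor_add_one r).le⟩

noncomputable def seqConcatFun (b : X) (t : I) : X :=
  if (t : ℝ) < 1 then seqConcatReal γ (t / (1 - t)) else b

theorem seqConcatFun_mem {S : Set X} (hb : b ∈ S) {n : ℕ} (hS : ∀ m ≥ n, ∀ t, γ m t ∈ S)
    {t : I} (ht : seqConcatTime n 0 ≤ t) : seqConcatFun γ b t ∈ S := by
  unfold seqConcatFun
  split_ifs with ht1
  · exact seqConcatReal_mem γ hS (le_div_one_sub_of_seqConcatTime_le ht ht1)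
  · exact hb

theorem continuous_seqConcatFun (hγ : ∀ U ∈ 𝓝 b, ∀ᶠ n in atTop, ∀ t, γ n t ∈ U) :
    Continuous (seqConcatFun γ b) := by
  refine continuous_iff_continuousAt.2 fun t => ?_
  rcases t.2.2.lt_or_eq with ht | ht
  · have hdiv : ContinuousAt (fun s : I => (s : ℝ) / (1 - s)) t :=
      ContinuousAt.div (by fun_prop) (by fun_prop) (by linarith)
    have hmaps : MapsTo (fun s : I => (s : ℝ) / (1 - s)) univ (Ici 0) :=
      fun s _ => div_nonneg s.2.1 (by linarith [s.2.2])
    have hreal : ContinuousAt (seqConcatReal γ ∘ fun s : I => (s : ℝ) / (1 - s)) t :=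
      (ContinuousWithinAt.comp (x := t) ((continuousOn_seqConcatReal γ).continuousWithinAt
        (hmaps (mem_univ t))) hdiv.continuousWithinAt hmaps).continuousAt univ_mem
    refine hreal.congr (eventuallyEq_of_mem ?_ fun s hs => (if_pos hs).symm)
    exact (isOpen_lt continuous_subtype_val continuous_const).mem_nhds ht
  · obtain rfl : t = 1 := Subtype.ext ht
    rw [ContinuousAt, show seqConcatFun γ b 1 = b from if_neg (lt_irrefl 1), tendsto_def]
    intro U hU
    obtain ⟨n, hn⟩ := (hγ U hU).exists_forall_of_atTop
    filter_upwards [Ioi_mem_nhds (Subtype.coe_lt_coe.1 (seqConcatTime_lt_one n 0))] with t ht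
    exact seqConcatFun_mem γ (mem_of_mem_nhds hU) hn ht.le

noncomputable def seqConcat (hγ : ∀ U ∈ 𝓝 b, ∀ᶠ n in atTop, ∀ t, γ n t ∈ U) : Path (x 0) b where
  toFun := seqConcatFun γ b
  continuous_toFun := continuous_seqConcatFun γ hγ
  source' := by simp [seqConcatFun, seqConcatReal]
  target' := if_neg (lt_irrefl 1)

theorem seqConcat_seqConcatTime (hγ : ∀ U ∈ 𝓝 b, ∀ᶠ n in atTop, ∀ t, γ n t ∈ U) (n : ℕ)
    (s : I) : seqConcat γ hγ (seqConcatTime n s) = γ n s := by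
  change ite _ _ _ = _
  rw [if_pos (seqConcatTime_lt_one n s), seqConcatTime_div_one_sub,
    seqConcatReal_eqOn γ n ⟨by linarith [s.2.1], by linarith [s.2.2]⟩]
  simp

end Path

namespace IsArcCovering

variable {E B : Type*} [TopologicalSpace E] [TopologicalSpace B] {p : C(E, B)}

theorem eq_of_comp_eq (hp : IsArcCovering p) {g h : C(I, E)} (hgh : p.comp g = p.comp h)
    (h0 : g 0 = h 0) : g = h :=
  (hp (h 0) (p.comp h) rfl).unique ⟨hgh, h0⟩ ⟨rfl, rfl⟩

theorem exists_forall_joinedIn (hp : IsArcCovering p) {b : B} {W : ℕ → Set B}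
    (hW : Antitone W) (hWb : ∀ U ∈ 𝓝 b, ∃ n, W n ⊆ U) (hb : ∀ n, b ∈ W n) {y : ℕ → E}
    (hy : ∀ n, JoinedIn (p ⁻¹' W n) (y n) (y (n + 1))) :
    ∃ z, p z = b ∧ ∀ n, JoinedIn (p ⁻¹' W n) (y n) z := by
  let γ : ∀ n, Path (p (y n)) (p (y (n + 1))) := fun n => (hy n).somePath.map p.continuous
  have hγW : ∀ n, ∀ m ≥ n, ∀ t, γ m t ∈ W n := fun n m hm t => hW hm ((hy m).somePath_mem t)
  have hγ : ∀ U ∈ 𝓝 b, ∀ᶠ n in atTop, ∀ t, γ n t ∈ U := fun U hU =>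
    let ⟨N, hN⟩ := hWb U hU
    eventually_atTop.2 ⟨N, fun n hn t => hN (hγW N n hn t)⟩
  let Γ := Path.seqConcat γ hγ
  obtain ⟨g, ⟨hpg, hg0⟩, -⟩ := hp (y 0) Γ Γ.source
  have hgy : ∀ n, g (Path.seqConcatTime n 0) = y n := by
    intro n
    induction n with
    | zero => rwa [Path.seqConcatTime_zero_zero]
    | succ n ih =>
      have hpiece : g.comp (Path.seqConcatTime n) = (hy n).somePath := by
        refine hp.eq_of_comp_eq ?_ (by simpa using ih)
        ext s
        exact congr($hpg (Path.seqConcatTime n s)).trans (Path.seqConcat_seqConcatTime γ hγ n s)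
      simpa [Path.seqConcatTime_one] using congr($hpiece 1)
  refine ⟨g 1, by simpa using congr($hpg 1), fun n => ?_⟩
  let tail : Path (y n) (g 1) :=
    ⟨⟨fun s => g (max (Path.seqConcatTime n 0) s), by fun_prop⟩, by simp [hgy],
      congrArg g (max_eq_right le_one')⟩
  refine ⟨tail, fun s => ?_⟩
  show p (g _) ∈ W n
  rw [← ContinuousMap.comp_apply, hpg]
  exact Path.seqConcatFun_mem γ (hb n) (hγW n) (le_max_left _ _)

end IsArcCovering

theorem BaireSpace.of_complete_nhds_system {Y β : Type*} [TopologicalSpace Y] (l : Filter β)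
    [l.IsCountablyGenerated] (C : Y → Set β → Set Y)
    (isOpen_C : ∀ y, ∀ W ∈ l, IsOpen (C y W)) (mem_C : ∀ y, ∀ W ∈ l, y ∈ C y W)
    (C_mono : ∀ y, Monotone (C y))
    (exists_C_subset : ∀ y U, IsOpen U → y ∈ U → ∃ W ∈ l, C y W ⊆ U)
    (complete : ∀ (y : ℕ → Y) (W : ℕ → Set β), l.HasAntitoneBasis W →
      (∀ n, y (n + 1) ∈ C (y n) (W n)) → ∃ z, ∀ n, z ∈ C (y n) (W n)) :
    BaireSpace Y := by
  refine ⟨fun D hDo hDd => dense_iff_inter_open.2 fun U hUo ⟨y₀, hy₀⟩ => ?_⟩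
  obtain ⟨V, hV⟩ := l.exists_antitone_basis
  have step : ∀ (n : ℕ) (y : Y) (W : {W // W ∈ l}), ∃ y' : Y, ∃ W' : {W // W ∈ l},
      y' ∈ C y W ∧ (W' : Set β) ⊆ W ∩ V (n + 1) ∧ C y' W' ⊆ D n := by
    rintro n y ⟨W, hW⟩
    obtain ⟨y', hy'C, hy'D⟩ := (hDd n).inter_open_nonempty _ (isOpen_C y W hW) ⟨y, mem_C y W hW⟩
    obtain ⟨W', hW', hW'D⟩ := exists_C_subset y' (D n) (hDo n) hy'D
    exact ⟨y', ⟨W' ∩ (W ∩ V (n + 1)), inter_mem hW' (inter_mem hW (hV.mem _))⟩, hy'C,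
      inter_subset_right, (C_mono y' inter_subset_left).trans hW'D⟩
  choose y' W' hy'C hW'W hy'D using step
  obtain ⟨W₀, hW₀, hW₀U⟩ := exists_C_subset y₀ U hUo hy₀
  let seq : ℕ → Y × {W // W ∈ l} := fun n => Nat.rec (y₀, ⟨W₀ ∩ V 0, inter_mem hW₀ (hV.mem 0)⟩)
    (fun n q => (y' n q.1 q.2, W' n q.1 q.2)) n
  have hanti : Antitone fun n => ((seq n).2 : Set β) :=
    antitone_nat_of_succ_le fun n => (hW'W n _ _).trans inter_subset_left
  have hsub : ∀ n, ((seq n).2 : Set β) ⊆ V n := by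
    rintro (_ | n)
    · exact inter_subset_right
    · exact (hW'W n _ _).trans inter_subset_right
  have hbasis : l.HasAntitoneBasis fun n => ((seq n).2 : Set β) :=
    ⟨hV.1.to_hasBasis' (fun n _ => ⟨n, trivial, hsub n⟩) fun n _ => (seq n).2.2, hanti⟩
  obtain ⟨z, hz⟩ := complete (fun n => (seq n).1) _ hbasis fun n => hy'C n _ _
  exact ⟨z, hW₀U (C_mono y₀ inter_subset_left (hz 0)),
    mem_iInter.2 fun n => hy'D n _ _ (hz (n + 1))⟩

theorem fiber_baire_general {E B : Type*} [TopologicalSpace E] [TopologicalSpace B]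
    [LocallyPathConnectedSpace E]
    (p : C(E, B)) (hp : IsArcCovering p) (hbasis : HedgehogBasisCondition p)
    (b₀ : B) (hcount : (nhds b₀).IsCountablyGenerated) :
    BaireSpace ↥(p ⁻¹' {b₀}) := by
  have hmem : ∀ W ∈ 𝓝 b₀, b₀ ∈ interior W := fun W hW => mem_interior_iff_mem_nhds.2 hW
  refine BaireSpace.of_complete_nhds_system (𝓝 b₀)
    -- `interior` makes these sets open for every `W`
    (fun y W => {z | JoinedIn (p ⁻¹' interior W) (y : E) z}) (fun y W _ => ?_)
    (fun y W hW => JoinedIn.refl (by rw [mem_preimage, (y.2 : p y = b₀)]; exact hmem W hW))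
    (fun y W W' h z hz => hz.mono (preimage_mono (interior_mono h))) (fun y U hU hyU => ?_)
    (fun y W hW hy => ?_)
  · exact ((isOpen_interior.preimage p.continuous).pathComponentIn _).preimage
      continuous_subtype_val
  · obtain ⟨U', hU'o, rfl⟩ := isOpen_induced_iff.1 hU
    obtain ⟨V, hV, hVU⟩ := hbasis y U' hU'o hyU
    refine ⟨V, (y.2 : p y = b₀) ▸ hV, fun z hz => hVU (hz.mono (preimage_mono interior_subset))⟩
  · obtain ⟨z, hz, hzy⟩ := hp.exists_forall_joinedIn (W := fun n => interior (W n))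
      (fun m n h => interior_mono (hW.2 h))
      (fun U hU => (hW.1.mem_iff.1 hU).imp fun n hn => interior_subset.trans hn.2)
      (fun n => hmem _ (hW.mem n)) (y := fun n => (y n : E)) hy
    exact ⟨⟨z, hz⟩, hzy⟩

/-- the fiber of an arc-hedgehog covering with Peano total space over a
point with a countable neighborhood basis is a Baire space. -/
theorem fiber_baire {E B : Type*} [TopologicalSpace E] [TopologicalSpace B]
    [ConnectedSpace E] [LocallyPathConnectedSpace E]
    (p : C(E, B)) (hp : IsArcCovering p) (hbasis : HedgehogBasisCondition p)
    (b₀ : B) (hcount : (nhds b₀).IsCountablyGenerated) :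
    BaireSpace ↥(p ⁻¹' {b₀}) :=
  fiber_baire_general p hp hbasis b₀ hcount
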